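/- Let I : (0,1) → (0,1) be quasiconcave. Then the following are equivalent: (a) T_I is bounded on L¹, i.e. there exists C > 0 such that ∫_0^1 (T_I f)(t) dt ≤ C·∫_0^1 f^*(t) dt for every f ∈ M_+(0,1); (b) I satisfies condition (★), i.e. there exists C' > 0 with ∫_0^t I(s)/s ds ≤ C'·I(t) for all t ∈ (0,1). -/

import Mathlib

open MeasureTheory Set Filter
open scoped ENNReal

noncomputable section

/-- The nonincreasing rearrangement of `f` over `(0,1)`. -/
def rearr (f : ℝ → ℝ≥0∞) (t : ℝ) : ℝ≥0∞ :=
  sInf {l : ℝ≥0∞ | volume {s ∈ Set.Ioo (0:ℝ) 1 | l < f s} ≤ ENNReal.ofReal t}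

/-- The maximal nonincreasing rearrangement `f^{**}(t) = (1/t) ∫_0^t f^*(s) ds`. -/
def dstar (f : ℝ → ℝ≥0∞) (t : ℝ) : ℝ≥0∞ :=
  (ENNReal.ofReal t)⁻¹ * ∫⁻ s in Set.Ioo (0:ℝ) t, rearr f s

/-- The `L¹(0,1)` norm. -/
def lOne (f : ℝ → ℝ≥0∞) : ℝ≥0∞ := ∫⁻ t in Set.Ioo (0:ℝ) 1, f t

/-- The norm of the Marcinkiewicz-type space `m_I`. -/
def mNorm (I : ℝ → ℝ) (f : ℝ → ℝ≥0∞) : ℝ≥0∞ :=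
  ⨆ t ∈ Set.Ioo (0:ℝ) 1, ENNReal.ofReal (I t) * rearr f t

/-- The norm of `m_Ĩ` where `Ĩ(t) = t / I(t)`. -/
def mNormTilde (I : ℝ → ℝ) (f : ℝ → ℝ≥0∞) : ℝ≥0∞ :=
  ⨆ t ∈ Set.Ioo (0:ℝ) 1, ENNReal.ofReal (t / I t) * rearr f t

/-- The supremum operator `S_I f(t) = (1/I(t)) sup_{0<s≤t} I(s) f^*(s)`. -/
def SI (I : ℝ → ℝ) (f : ℝ → ℝ≥0∞) : ℝ → ℝ≥0∞ := fun t =>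
  (ENNReal.ofReal (I t))⁻¹ * ⨆ s ∈ Set.Ioc (0:ℝ) t, ENNReal.ofReal (I s) * rearr f s

/-- The supremum operator `T_I f(t) = (I(t)/t) sup_{t≤s<1} (s/I(s)) f^*(s)`. -/
def TI (I : ℝ → ℝ) (f : ℝ → ℝ≥0∞) : ℝ → ℝ≥0∞ := fun t =>
  ENNReal.ofReal (I t / t) * ⨆ s ∈ Set.Ico t 1, ENNReal.ofReal (s / I s) * rearr f s

/-- `H_I f(t) = ∫_t^1 f(s)/I(s) ds`. -/
def HI (I : ℝ → ℝ) (f : ℝ → ℝ≥0∞) : ℝ → ℝ≥0∞ := fun t =>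
  ∫⁻ s in Set.Ioo t 1, f s / ENNReal.ofReal (I s)

/-- `R_I f(t) = (1/I(t)) ∫_0^t f(s) ds`. -/
def RI (I : ℝ → ℝ) (f : ℝ → ℝ≥0∞) : ℝ → ℝ≥0∞ := fun t =>
  (ENNReal.ofReal (I t))⁻¹ * ∫⁻ s in Set.Ioo (0:ℝ) t, f s

/-- `I : (0,1) → (0,1)` is quasiconcave: a nondecreasing bijection of `(0,1)` onto `(0,1)`
with `I(t)/t` nonincreasing, `I(0+) = 0` and `I(1-) = 1`. -/
def Quasiconcave (I : ℝ → ℝ) : Prop :=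
  Set.BijOn I (Set.Ioo 0 1) (Set.Ioo 0 1) ∧
  MonotoneOn I (Set.Ioo 0 1) ∧
  AntitoneOn (fun t => I t / t) (Set.Ioo 0 1) ∧
  Tendsto I (nhdsWithin 0 (Set.Ioo 0 1)) (nhds 0) ∧
  Tendsto I (nhdsWithin 1 (Set.Ioo 0 1)) (nhds 1)

/-- Condition (★): `∫_0^t I(s)/s ds ≲ I(t)`. -/
def StarCond (I : ℝ → ℝ) : Prop :=
  ∃ C : ℝ, 0 < C ∧ ∀ t ∈ Set.Ioo (0:ℝ) 1,
    ∫⁻ s in Set.Ioo (0:ℝ) t, ENNReal.ofReal (I s / s) ≤ ENNReal.ofReal (C * I t)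

/-- The average property: `∫_0^t ds/I(s) ≲ t/I(t)`. -/
def AvgProp (I : ℝ → ℝ) : Prop :=
  ∃ C : ℝ, 0 < C ∧ ∀ t ∈ Set.Ioo (0:ℝ) 1,
    ∫⁻ s in Set.Ioo (0:ℝ) t, ENNReal.ofReal (1 / I s) ≤ ENNReal.ofReal (C * (t / I t))

/-- The condition `∫_t^1 I(s)/s² ds ≲ (1/t) ∫_0^t I(s)/s ds`. -/
def MaxCond (I : ℝ → ℝ) : Prop :=
  ∃ C : ℝ, 0 < C ∧ ∀ t ∈ Set.Ioo (0:ℝ) 1,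
    ∫⁻ s in Set.Ioo t 1, ENNReal.ofReal (I s / s ^ 2) ≤
      ENNReal.ofReal (C / t) * ∫⁻ s in Set.Ioo (0:ℝ) t, ENNReal.ofReal (I s / s)

/-- The class `𝒬` of quasiconcave functions. -/
def ClassQ (I : ℝ → ℝ) : Prop :=
  Quasiconcave I ∧ StarCond I ∧ AvgProp I ∧ MaxCond I ∧
  ∃ c d : ℝ,
    IsLUB {l : ℝ | 0 ≤ l ∧ ∀ t ∈ Set.Ioo (0:ℝ) 1,
      ENNReal.ofReal (l * (I t / t ^ 2 - 1)) ≤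
        ∫⁻ s in Set.Ioo t 1, ENNReal.ofReal (I s / s ^ 3)} c ∧
    IsLeast {e : ℝ | 0 < e ∧ ∀ t ∈ Set.Ioo (0:ℝ) 1,
      ∫⁻ s in Set.Ioo t 1, ENNReal.ofReal (I s / s ^ 2) ≤
        ENNReal.ofReal (e * (I t / t))} d ∧
    (1 - c) * d ≤ c

/-- The `Δ₂` condition: `I(2t) ≤ C I(t)` for `t ∈ (0,1/2)`. -/
def Delta2 (I : ℝ → ℝ) : Prop :=
  ∃ C : ℝ, 0 < C ∧ ∀ t ∈ Set.Ioo (0:ℝ) (1/2), I (2 * t) ≤ C * I t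

/-- A rearrangement-invariant Banach function norm on `M₊(0,1)`. -/
def IsRiNorm (ρ : (ℝ → ℝ≥0∞) → ℝ≥0∞) : Prop :=
  (∀ f : ℝ → ℝ≥0∞, Measurable f →
      (ρ f = 0 ↔ f =ᵐ[volume.restrict (Set.Ioo (0:ℝ) 1)] 0)) ∧
  (∀ f : ℝ → ℝ≥0∞, Measurable f → ∀ a : ℝ, 0 ≤ a →
      ρ (fun t => ENNReal.ofReal a * f t) = ENNReal.ofReal a * ρ f) ∧
  (∀ f g : ℝ → ℝ≥0∞, Measurable f → Measurable g →
      ρ (fun t => f t + g t) ≤ ρ f + ρ g) ∧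
  (∀ f g : ℝ → ℝ≥0∞, Measurable f → Measurable g →
      (∀ᵐ t ∂(volume.restrict (Set.Ioo (0:ℝ) 1)), f t ≤ g t) → ρ f ≤ ρ g) ∧
  (∀ (fn : ℕ → ℝ → ℝ≥0∞) (f : ℝ → ℝ≥0∞), (∀ n, Measurable (fn n)) → Measurable f →
      (∀ᵐ t ∂(volume.restrict (Set.Ioo (0:ℝ) 1)), Monotone (fun n => fn n t)) →
      (∀ᵐ t ∂(volume.restrict (Set.Ioo (0:ℝ) 1)), (⨆ n, fn n t) = f t) →
      (⨆ n, ρ (fn n)) = ρ f) ∧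
  (ρ (fun _ => 1) < ⊤) ∧
  (∃ c : ℝ, 0 < c ∧ ∀ f : ℝ → ℝ≥0∞, Measurable f →
      ∫⁻ t in Set.Ioo (0:ℝ) 1, f t ≤ ENNReal.ofReal c * ρ f) ∧
  (∀ f : ℝ → ℝ≥0∞, Measurable f → ρ f = ρ (rearr f))

/-- The associate norm `ρ'`. -/
def assoc (ρ : (ℝ → ℝ≥0∞) → ℝ≥0∞) (f : ℝ → ℝ≥0∞) : ℝ≥0∞ :=
  ⨆ (g : ℝ → ℝ≥0∞) (_ : Measurable g ∧ ρ g ≤ 1),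
    ∫⁻ t in Set.Ioo (0:ℝ) 1, f t * g t

/-- The optimal target norm `‖f‖_{Y_X}` of the r.i. norm `ρ = ‖·‖_X` under `H_I`. -/
def optTargetNorm (I : ℝ → ℝ) (ρ : (ℝ → ℝ≥0∞) → ℝ≥0∞) (f : ℝ → ℝ≥0∞) : ℝ≥0∞ :=
  ⨆ (g : ℝ → ℝ≥0∞) (_ : Measurable g ∧ assoc ρ (RI I (rearr g)) ≤ 1),
    ∫⁻ t in Set.Ioo (0:ℝ) 1, rearr f t * rearr g t

/-- The optimal domain norm `‖f‖_{X_Y} = sup_{h ∼ f} ‖H_I h‖_Y`. -/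
def optDomainNorm (I : ℝ → ℝ) (ρY : (ℝ → ℝ≥0∞) → ℝ≥0∞) (f : ℝ → ℝ≥0∞) : ℝ≥0∞ :=
  ⨆ (h : ℝ → ℝ≥0∞)
    (_ : Measurable h ∧ ∀ t ∈ Set.Ioo (0:ℝ) 1, rearr h t = rearr f t),
      ρY (HI I h)

/-- `H_I : X → Y` boundedly. -/
def HIBounded (I : ℝ → ℝ) (ρX ρY : (ℝ → ℝ≥0∞) → ℝ≥0∞) : Prop :=
  ∃ C : ℝ, 0 < C ∧ ∀ f : ℝ → ℝ≥0∞, Measurable f →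
    ρY (HI I f) ≤ ENNReal.ofReal C * ρX f

/-- `X` is the optimal domain space for `Y` under `H_I`. -/
def IsOptimalDomain (I : ℝ → ℝ) (ρX ρY : (ℝ → ℝ≥0∞) → ℝ≥0∞) : Prop :=
  HIBounded I ρX ρY ∧
  ∀ ρZ : (ℝ → ℝ≥0∞) → ℝ≥0∞, IsRiNorm ρZ → HIBounded I ρZ ρY →
    ∃ C : ℝ, 0 < C ∧ ∀ f : ℝ → ℝ≥0∞, Measurable f →
      ρX f ≤ ENNReal.ofReal C * ρZ f

/-- `Y` is the optimal target space for `X` under `H_I`. -/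
def IsOptimalTarget (I : ℝ → ℝ) (ρX ρY : (ℝ → ℝ≥0∞) → ℝ≥0∞) : Prop :=
  HIBounded I ρX ρY ∧
  ∀ ρZ : (ℝ → ℝ≥0∞) → ℝ≥0∞, IsRiNorm ρZ → HIBounded I ρX ρZ →
    ∃ C : ℝ, 0 < C ∧ ∀ f : ℝ → ℝ≥0∞, Measurable f →
      ρZ f ≤ ENNReal.ofReal C * ρY f

/-!
Boundedness of `T_I` tested on `f = 𝟙_(0,a)` gives `(a / I(a)) ∫_0^a I(s)/s ds ≲ a`, which
is (★).

Conversely, write the nonincreasing function `g = f^*` as a superposition of the indicators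
of its level sets `(0, d(λ))`, `d(λ) = |{g > λ}|`.  For such an indicator the supremum in `T_I`
is at most `Ĩ(d(λ)) = d(λ) / I(d(λ))` and is only present for `t ≤ d(λ)`, while (★) gives
`Ĩ(a) ∫_0^a I(t)/t dt ≲ a`.  Integrating over `λ` (Tonelli) and using the layer-cake formula
`∫_0^1 g = ∫_0^∞ d(λ) dλ` yields `‖T_I f‖₁ ≲ ‖f^*‖₁`.
-/

open ENNReal (ofReal)
open scoped Topology

/-- `Ĩ(t) = t / I(t)`, continued by its limit value `1` from `t = 1` on. -/
def Itilde (I : ℝ → ℝ) (x : ℝ) : ℝ := if x < 1 then x / I x else 1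

lemma Itilde_of_lt_one {I : ℝ → ℝ} {x : ℝ} (hx : x < 1) : Itilde I x = x / I x := if_pos hx

namespace Quasiconcave

variable {I : ℝ → ℝ}

lemma apply_mem (hqc : Quasiconcave I) {t : ℝ} (ht : t ∈ Ioo (0:ℝ) 1) :
    I t ∈ Ioo (0:ℝ) 1 :=
  hqc.1.mapsTo ht

lemma div_apply_monotoneOn (hqc : Quasiconcave I) :
    MonotoneOn (fun t => t / I t) (Ioo (0:ℝ) 1) := by
  intro x hx y hy hxy
  have h := hqc.2.2.1 hx hy hxy
  simp only [div_le_div_iff₀ hy.1 hx.1] at h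
  simp only [div_le_div_iff₀ (hqc.apply_mem hx).1 (hqc.apply_mem hy).1]
  linarith

/-- Since `I(s) ≤ I(s)/s ≤ I(t)/t` for `t < s < 1`, letting `s → 1` gives `1 ≤ I(t)/t`. -/
lemma self_le_apply (hqc : Quasiconcave I) {t : ℝ} (ht : t ∈ Ioo (0:ℝ) 1) : t ≤ I t := by
  have hlim : Tendsto I (𝓝[<] 1) (𝓝 1) := by
    simpa only [nhdsWithin_Ioo_eq_nhdsLT zero_lt_one] using hqc.2.2.2.2
  have hle : ∀ᶠ s in 𝓝[<] (1:ℝ), I s ≤ I t / t := by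
    filter_upwards [Ioo_mem_nhdsLT ht.2] with s hs
    have hs01 : s ∈ Ioo (0:ℝ) 1 := ⟨ht.1.trans hs.1, hs.2⟩
    calc I s ≤ I s / s := le_div_self (hqc.apply_mem hs01).1.le hs01.1 hs01.2.le
      _ ≤ I t / t := hqc.2.2.1 ht hs01 hs.1.le
  have := le_of_tendsto hlim hle
  rwa [le_div_iff₀ ht.1, one_mul] at this

lemma Itilde_nonneg (hqc : Quasiconcave I) {x : ℝ} (hx : 0 ≤ x) : 0 ≤ Itilde I x := by
  unfold Itilde
  split_ifs with h1
  · rcases hx.eq_or_lt with rfl | hx0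
    · simp
    · exact div_nonneg hx (hqc.apply_mem ⟨hx0, h1⟩).1.le
  · exact zero_le_one

lemma Itilde_monotoneOn (hqc : Quasiconcave I) : MonotoneOn (Itilde I) (Icc 0 1) := by
  intro x hx y hy hxy
  rcases hx.1.eq_or_lt with rfl | hx0
  · simpa [Itilde] using hqc.Itilde_nonneg hy.1
  rcases hy.2.lt_or_eq with hy1 | rfl
  · rw [Itilde_of_lt_one (hxy.trans_lt hy1), Itilde_of_lt_one hy1]
    exact hqc.div_apply_monotoneOn ⟨hx0, hxy.trans_lt hy1⟩ ⟨hx0.trans_le hxy, hy1⟩ hxy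
  rcases hx.2.lt_or_eq with hx1 | rfl
  · rw [Itilde_of_lt_one hx1, Itilde, if_neg (lt_irrefl 1),
      div_le_one (hqc.apply_mem ⟨hx0, hx1⟩).1]
    exact hqc.self_le_apply ⟨hx0, hx1⟩
  · exact le_rfl

end Quasiconcave

lemma rearr_antitone (f : ℝ → ℝ≥0∞) : Antitone (rearr f) :=
  fun _ _ hxy => sInf_le_sInf fun _ hl => hl.trans (ENNReal.ofReal_le_ofReal hxy)

lemma rearr_indicator_Ioo {a : ℝ} (ha : a ∈ Ioo (0:ℝ) 1) :
    rearr ((Ioo 0 a).indicator 1) = (Iio a).indicator 1 := by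
  have hsub : ∀ l : ℝ≥0∞, {x ∈ Ioo (0:ℝ) 1 | l < (Ioo 0 a).indicator 1 x} ⊆ Ioo 0 a :=
    fun l x hx => by_contra fun hxa => by simp [indicator_of_notMem hxa] at hx
  funext s
  by_cases hs : s < a
  · rw [indicator_of_mem (show s ∈ Iio a from hs), Pi.one_apply]
    refine le_antisymm (sInf_le ?_) (le_sInf fun l hl => ?_)
    · have hempty : {x ∈ Ioo (0:ℝ) 1 | (1 : ℝ≥0∞) < (Ioo 0 a).indicator 1 x} = ∅ :=
        eq_empty_of_forall_notMem fun x hx =>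
          (hx.2.trans_le (indicator_le_self' (fun _ _ => zero_le) x)).false
      show volume _ ≤ _
      rw [hempty, measure_empty]
      exact zero_le
    · by_contra! hl1
      have hsup : Ioo 0 a ⊆ {x ∈ Ioo (0:ℝ) 1 | l < (Ioo 0 a).indicator 1 x} :=
        fun x hx => ⟨⟨hx.1, hx.2.trans ha.2⟩, by simpa [indicator_of_mem hx] using hl1⟩
      have := (measure_mono hsup).trans (show _ ≤ ofReal s from hl)
      rw [Real.volume_Ioo, sub_zero] at this
      exact (ENNReal.ofReal_lt_ofReal_iff ha.1).2 hs |>.not_ge this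
  · rw [indicator_of_notMem (show s ∉ Iio a from hs)]
    refine le_antisymm (sInf_le ?_) zero_le
    calc volume {x ∈ Ioo (0:ℝ) 1 | 0 < (Ioo 0 a).indicator 1 x} ≤ volume (Ioo 0 a) :=
          measure_mono (hsub 0)
      _ ≤ ofReal s := by simpa using ENNReal.ofReal_le_ofReal (not_lt.1 hs)

lemma lintegral_Ioi_indicator_ofReal_lt (x : ℝ≥0∞) :
    ∫⁻ l in Ioi (0:ℝ), {l : ℝ | ofReal l < x}.indicator 1 l = x := by
  have hmeas : MeasurableSet {l : ℝ | ofReal l < x} :=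
    measurableSet_lt ENNReal.measurable_ofReal measurable_const
  rw [lintegral_indicator_one hmeas, Measure.restrict_apply hmeas]
  rcases eq_or_ne x ⊤ with rfl | hx
  · simp [ENNReal.ofReal_lt_top]
  · have hset : {l : ℝ | ofReal l < x} ∩ Ioi 0 = Ioo 0 x.toReal := by
      ext l
      simp only [mem_inter_iff, mem_ofPred_eq, mem_Ioi, mem_Ioo]
      exact ⟨fun h => ⟨h.2, (ENNReal.ofReal_lt_iff_lt_toReal h.2.le hx).1 h.1⟩,
        fun h => ⟨(ENNReal.ofReal_lt_iff_lt_toReal h.1.le hx).2 h.2, h.1⟩⟩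
    rw [hset, Real.volume_Ioo, sub_zero, ENNReal.ofReal_toReal hx]

theorem lintegral_eq_lintegral_meas_ofReal_lt {α : Type*} [MeasurableSpace α] (μ : Measure α)
    [SFinite μ] {g : α → ℝ≥0∞} (hg : Measurable g) :
    ∫⁻ x, g x ∂μ = ∫⁻ l in Ioi (0:ℝ), μ {x | ofReal l < g x} := by
  have hregion : MeasurableSet {p : α × ℝ | ofReal p.2 < g p.1} :=
    measurableSet_lt (ENNReal.measurable_ofReal.comp measurable_snd) (hg.comp measurable_fst)
  have hmeas : Measurable (Function.uncurry fun (x : α) (l : ℝ) =>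
      {l : ℝ | ofReal l < g x}.indicator (1 : ℝ → ℝ≥0∞) l) :=
    measurable_one.indicator hregion
  calc ∫⁻ x, g x ∂μ
      = ∫⁻ x, (∫⁻ l in Ioi (0:ℝ), {l : ℝ | ofReal l < g x}.indicator 1 l) ∂μ := by
        simp only [lintegral_Ioi_indicator_ofReal_lt]
    _ = ∫⁻ l in Ioi (0:ℝ), ∫⁻ x, {x | ofReal l < g x}.indicator 1 x ∂μ :=
        lintegral_lintegral_swap hmeas.aemeasurable
    _ = ∫⁻ l in Ioi (0:ℝ), μ {x | ofReal l < g x} := by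
        simp only [lintegral_indicator_one (measurableSet_lt measurable_const hg)]

def distribFun (g : ℝ → ℝ≥0∞) (l : ℝ) : ℝ :=
  (volume.restrict (Ioo (0:ℝ) 1) {u | ofReal l < g u}).toReal

section distribFun

variable {g : ℝ → ℝ≥0∞}

lemma ofReal_distribFun (g : ℝ → ℝ≥0∞) (l : ℝ) :
    ofReal (distribFun g l) = volume.restrict (Ioo (0:ℝ) 1) {u | ofReal l < g u} :=
  ENNReal.ofReal_toReal (measure_ne_top _ _)

lemma distribFun_mem_Icc (g : ℝ → ℝ≥0∞) (l : ℝ) : distribFun g l ∈ Icc (0:ℝ) 1 := by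
  refine ⟨ENNReal.toReal_nonneg, ?_⟩
  have := measure_mono (μ := volume.restrict (Ioo (0:ℝ) 1)) (subset_univ {u | ofReal l < g u})
  simpa [distribFun] using ENNReal.toReal_mono (by simp) this

lemma distribFun_antitone (g : ℝ → ℝ≥0∞) : Antitone (distribFun g) :=
  fun _ _ hl => ENNReal.toReal_mono (measure_ne_top _ _)
    (measure_mono fun _ hu => (ENNReal.ofReal_le_ofReal hl).trans_lt hu)

lemma le_distribFun (hg : Antitone g) {s l : ℝ} (hs : s ∈ Ioo (0:ℝ) 1) (hl : ofReal l < g s) :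
    s ≤ distribFun g l := by
  have hsub : Ioc 0 s ⊆ {u | ofReal l < g u} ∩ Ioo 0 1 :=
    fun u hu => ⟨hl.trans_le (hg hu.2), hu.1, hu.2.trans_lt hs.2⟩
  refine (ENNReal.ofReal_le_iff_le_toReal (measure_ne_top _ _)).1 ?_
  calc ofReal s = volume (Ioc 0 s) := by rw [Real.volume_Ioc, sub_zero]
    _ ≤ volume.restrict (Ioo (0:ℝ) 1) {u | ofReal l < g u} :=
        (measure_mono hsub).trans (Measure.le_restrict_apply _ _)

lemma lintegral_ofReal_distribFun (hg : Antitone g) :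
    ∫⁻ l in Ioi (0:ℝ), ofReal (distribFun g l) = ∫⁻ u in Ioo (0:ℝ) 1, g u := by
  simp only [ofReal_distribFun]
  exact (lintegral_eq_lintegral_meas_ofReal_lt _ hg.measurable).symm

end distribFun

lemma Quasiconcave.iSup_mul_le_lintegral_distribFun {I : ℝ → ℝ} (hqc : Quasiconcave I)
    {g : ℝ → ℝ≥0∞} (hg : Antitone g) {t : ℝ} (ht : t ∈ Ioo (0:ℝ) 1) :
    ⨆ s ∈ Ico t 1, ofReal (s / I s) * g s ≤
      ∫⁻ l in Ioi (0:ℝ),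
        (Iic (distribFun g l)).indicator (fun _ => ofReal (Itilde I (distribFun g l))) t := by
  refine iSup₂_le fun s hs => ?_
  have hs01 : s ∈ Ioo (0:ℝ) 1 := ⟨ht.1.trans_le hs.1, hs.2⟩
  calc ofReal (s / I s) * g s
      = ∫⁻ l in Ioi (0:ℝ), ofReal (s / I s) * {l : ℝ | ofReal l < g s}.indicator 1 l := by
        rw [lintegral_const_mul' _ _ ENNReal.ofReal_ne_top, lintegral_Ioi_indicator_ofReal_lt]
    _ ≤ _ := lintegral_mono fun l => ?_
  by_cases hl : ofReal l < g s
  · have hsl := le_distribFun hg hs01 hl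
    rw [indicator_of_mem (show l ∈ {l : ℝ | ofReal l < g s} from hl),
      indicator_of_mem (show t ∈ Iic (distribFun g l) from hs.1.trans hsl),
      Pi.one_apply, mul_one, ← Itilde_of_lt_one hs.2]
    exact ENNReal.ofReal_le_ofReal
      (hqc.Itilde_monotoneOn ⟨hs01.1.le, hs01.2.le⟩ (distribFun_mem_Icc g l) hsl)
  · rw [indicator_of_notMem (show l ∉ {l : ℝ | ofReal l < g s} from hl), mul_zero]
    exact zero_le

section StarCondition

variable {I : ℝ → ℝ} {C : ℝ} (hqc : Quasiconcave I)
  (hstar : ∀ t ∈ Ioo (0:ℝ) 1,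
    ∫⁻ s in Ioo (0:ℝ) t, ofReal (I s / s) ≤ ofReal (C * I t))
include hqc hstar

/-- On `[1/2, 1)` the weight `I(t)/t` is at most `2`, so that part contributes at most `1`. -/
lemma lintegral_Ioo_zero_one_le (hC : 0 ≤ C) :
    ∫⁻ t in Ioo (0:ℝ) 1, ofReal (I t / t) ≤ ofReal (C + 1) := by
  have hhalf : (1/2 : ℝ) ∈ Ioo 0 1 := by norm_num
  have hsplit : Ioo (0:ℝ) 1 ⊆ Ioo 0 (1/2) ∪ Ico (1/2) 1 := fun t ht =>
    (lt_or_ge t (1/2)).elim (fun h => Or.inl ⟨ht.1, h⟩) (fun h => Or.inr ⟨h, ht.2⟩)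
  have hlow : ∫⁻ t in Ioo (0:ℝ) (1/2), ofReal (I t / t) ≤ ofReal C :=
    (hstar _ hhalf).trans (ENNReal.ofReal_le_ofReal
      (mul_le_of_le_one_right hC (hqc.apply_mem hhalf).2.le))
  have hhigh : ∫⁻ t in Ico (1/2 : ℝ) 1, ofReal (I t / t) ≤ 1 := by
    calc ∫⁻ t in Ico (1/2 : ℝ) 1, ofReal (I t / t)
        ≤ ∫⁻ _ in Ico (1/2 : ℝ) 1, ofReal 2 := by
          refine setLIntegral_mono measurable_const fun t ht => ENNReal.ofReal_le_ofReal ?_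
          have ht0 : 0 < t := lt_of_lt_of_le (by norm_num) ht.1
          rw [div_le_iff₀ ht0]
          linarith [(hqc.apply_mem ⟨ht0, ht.2⟩).2, ht.1]
      _ = 1 := by
          rw [setLIntegral_const, Real.volume_Ico, ← ENNReal.ofReal_mul zero_le_two]
          norm_num
  calc ∫⁻ t in Ioo (0:ℝ) 1, ofReal (I t / t)
      ≤ (∫⁻ t in Ioo (0:ℝ) (1/2), ofReal (I t / t)) +
          ∫⁻ t in Ico (1/2 : ℝ) 1, ofReal (I t / t) :=
        (lintegral_mono_set hsplit).trans (lintegral_union_le _ _ _)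
    _ ≤ ofReal C + 1 := add_le_add hlow hhigh
    _ = ofReal (C + 1) := by rw [ENNReal.ofReal_add hC zero_le_one, ENNReal.ofReal_one]

lemma Itilde_mul_lintegral_le (hC : 0 ≤ C) {a : ℝ} (ha : a ∈ Icc (0:ℝ) 1) :
    ofReal (Itilde I a) * ∫⁻ t in Iic a ∩ Ioo 0 1, ofReal (I t / t) ≤
      ofReal ((C + 1) * a) := by
  rcases ha.1.eq_or_lt with rfl | ha0
  · simp [Itilde]
  rcases ha.2.lt_or_eq with ha1 | rfl
  · have hIa := (hqc.apply_mem ⟨ha0, ha1⟩).1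
    have hset : Iic a ∩ Ioo 0 1 = Ioc 0 a := by
      ext t
      simp only [mem_inter_iff, mem_Iic, mem_Ioo, mem_Ioc]
      exact ⟨fun h => ⟨h.2.1, h.1⟩, fun h => ⟨h.2, h.1, h.2.trans_lt ha1⟩⟩
    rw [hset, ← setLIntegral_congr Ioo_ae_eq_Ioc, Itilde_of_lt_one ha1]
    calc ofReal (a / I a) * ∫⁻ t in Ioo 0 a, ofReal (I t / t)
        ≤ ofReal (a / I a) * ofReal (C * I a) := by gcongr; exact hstar a ⟨ha0, ha1⟩
      _ = ofReal (C * a) := by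
          rw [← ENNReal.ofReal_mul (div_nonneg ha0.le hIa.le)]
          congr 1
          field_simp
      _ ≤ ofReal ((C + 1) * a) := ENNReal.ofReal_le_ofReal (by nlinarith)
  · rw [Itilde, if_neg (lt_irrefl 1), inter_eq_right.2 fun t ht => ht.2.le,
      ENNReal.ofReal_one, one_mul, mul_one]
    exact lintegral_Ioo_zero_one_le hqc hstar hC

theorem lintegral_weight_mul_iSup_le (hC : 0 ≤ C) {g : ℝ → ℝ≥0∞} (hg : Antitone g) :
    ∫⁻ t in Ioo (0:ℝ) 1, ofReal (I t / t) * ⨆ s ∈ Ico t 1, ofReal (s / I s) * g s ≤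
      ofReal (C + 1) * ∫⁻ t in Ioo (0:ℝ) 1, g t := by
  set d := distribFun g
  set k : ℝ → ℝ → ℝ≥0∞ := fun t l =>
    (Iic (d l)).indicator (fun _ => ofReal (Itilde I (d l))) t
  have hk : Measurable (Function.uncurry k) := by
    have hψ : Antitone fun l => Itilde I (d l) := fun l l' h =>
      hqc.Itilde_monotoneOn (distribFun_mem_Icc g l') (distribFun_mem_Icc g l)
        (distribFun_antitone g h)
    exact (ENNReal.measurable_ofReal.comp (hψ.measurable.comp measurable_snd)).indicator
      (measurableSet_le measurable_fst ((distribFun_antitone g).measurable.comp measurable_snd))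
  have hw : AEMeasurable (fun t => ofReal (I t / t)) (volume.restrict (Ioo (0:ℝ) 1)) :=
    ENNReal.measurable_ofReal.comp_aemeasurable
      (aemeasurable_restrict_of_antitoneOn measurableSet_Ioo hqc.2.2.1)
  have hlevel : ∀ l,
      ∫⁻ t in Ioo (0:ℝ) 1, ofReal (I t / t) * k t l ≤ ofReal ((C + 1) * d l) := by
    intro l
    have hk_eq : ∀ t, ofReal (I t / t) * k t l =
        ofReal (Itilde I (d l)) * (Iic (d l)).indicator (fun t => ofReal (I t / t)) t := by
      intro t
      by_cases h : t ∈ Iic (d l) <;> simp [k, h, mul_comm]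
    rw [lintegral_congr hk_eq, lintegral_const_mul' _ _ ENNReal.ofReal_ne_top,
      lintegral_indicator measurableSet_Iic, Measure.restrict_restrict measurableSet_Iic]
    exact Itilde_mul_lintegral_le hqc hstar hC (distribFun_mem_Icc g l)
  calc ∫⁻ t in Ioo (0:ℝ) 1, ofReal (I t / t) * ⨆ s ∈ Ico t 1, ofReal (s / I s) * g s
      ≤ ∫⁻ t in Ioo (0:ℝ) 1, ∫⁻ l in Ioi (0:ℝ), ofReal (I t / t) * k t l :=
        setLIntegral_mono' measurableSet_Ioo fun t ht => by
          rw [lintegral_const_mul' _ _ ENNReal.ofReal_ne_top]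
          gcongr
          exact hqc.iSup_mul_le_lintegral_distribFun hg ht
    _ = ∫⁻ l in Ioi (0:ℝ), ∫⁻ t in Ioo (0:ℝ) 1, ofReal (I t / t) * k t l :=
        lintegral_lintegral_swap (hw.comp_fst.mul hk.aemeasurable)
    _ ≤ ∫⁻ l in Ioi (0:ℝ), ofReal (C + 1) * ofReal (d l) := by
        refine lintegral_mono fun l => (hlevel l).trans_eq ?_
        rw [ENNReal.ofReal_mul (by linarith)]
    _ = ofReal (C + 1) * ∫⁻ t in Ioo (0:ℝ) 1, g t := by
        rw [lintegral_const_mul' _ _ ENNReal.ofReal_ne_top, lintegral_ofReal_distribFun hg]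

end StarCondition

lemma Quasiconcave.ofReal_mul_le_TI_indicator {I : ℝ → ℝ} (hqc : Quasiconcave I) {a t : ℝ}
    (ha : a ∈ Ioo (0:ℝ) 1) (ht : t ∈ Ioo 0 a) :
    ofReal (I t / t) * ofReal (a / I a) ≤ TI I ((Ioo 0 a).indicator 1) t := by
  rw [TI, rearr_indicator_Ioo ha]
  gcongr
  have hlim : Tendsto (fun s => ofReal (s / I a)) (𝓝[<] a) (𝓝 (ofReal (a / I a))) :=
    ENNReal.tendsto_ofReal (((continuous_id.div_const _).tendsto a).mono_left nhdsWithin_le_nhds)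
  refine le_of_tendsto hlim ?_
  filter_upwards [Ioo_mem_nhdsLT ht.2] with s hs
  have hs01 : s ∈ Ioo (0:ℝ) 1 := ⟨ht.1.trans hs.1, hs.2.trans ha.2⟩
  calc ofReal (s / I a) ≤ ofReal (s / I s) * (Iio a).indicator 1 s := by
        rw [indicator_of_mem (show s ∈ Iio a from hs.2), Pi.one_apply, mul_one]
        exact ENNReal.ofReal_le_ofReal (div_le_div_of_nonneg_left hs01.1.le
          (hqc.apply_mem hs01).1 (hqc.2.1 hs01 ha hs.2.le))
    _ ≤ ⨆ s ∈ Ico t 1, ofReal (s / I s) * (Iio a).indicator 1 s :=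
        le_iSup₂_of_le s ⟨hs.1.le, hs01.2⟩ le_rfl

theorem Quasiconcave.lintegral_le_of_lintegral_TI_le {I : ℝ → ℝ} {C : ℝ}
    (hqc : Quasiconcave I)
    (h : ∀ f : ℝ → ℝ≥0∞, Measurable f →
      ∫⁻ t in Ioo (0:ℝ) 1, TI I f t ≤ ofReal C * ∫⁻ t in Ioo (0:ℝ) 1, rearr f t)
    {a : ℝ} (ha : a ∈ Ioo (0:ℝ) 1) :
    ∫⁻ s in Ioo (0:ℝ) a, ofReal (I s / s) ≤ ofReal (C * I a) := by
  set f : ℝ → ℝ≥0∞ := (Ioo 0 a).indicator 1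
  have hIa := (hqc.apply_mem ha).1
  have hnorm : ∫⁻ t in Ioo (0:ℝ) 1, rearr f t = ofReal a := by
    rw [rearr_indicator_Ioo ha, lintegral_indicator_one measurableSet_Iio,
      Measure.restrict_apply measurableSet_Iio, Iio_inter_Ioo, min_eq_left ha.2.le,
      Real.volume_Ioo, sub_zero]
  have key : ofReal (a / I a) * ∫⁻ s in Ioo (0:ℝ) a, ofReal (I s / s) ≤
      ofReal (a / I a) * ofReal (C * I a) :=
    calc ofReal (a / I a) * ∫⁻ s in Ioo (0:ℝ) a, ofReal (I s / s)
        = ∫⁻ t in Ioo (0:ℝ) a, ofReal (I t / t) * ofReal (a / I a) := by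
          rw [lintegral_mul_const' _ _ ENNReal.ofReal_ne_top, mul_comm]
      _ ≤ ∫⁻ t in Ioo (0:ℝ) a, TI I f t :=
          setLIntegral_mono' measurableSet_Ioo fun t ht => hqc.ofReal_mul_le_TI_indicator ha ht
      _ ≤ ∫⁻ t in Ioo (0:ℝ) 1, TI I f t := lintegral_mono_set (Ioo_subset_Ioo_right ha.2.le)
      _ ≤ ofReal C * ofReal a := hnorm ▸ h f (measurable_one.indicator measurableSet_Ioo)
      _ = ofReal (a / I a) * ofReal (C * I a) := by
          rw [← ENNReal.ofReal_mul' ha.1.le, ← ENNReal.ofReal_mul (div_nonneg ha.1.le hIa.le)]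
          congr 1
          field_simp
  exact (ENNReal.mul_le_mul_iff_right (by simpa using div_pos ha.1 hIa) ENNReal.ofReal_ne_top).1 key

/-- Theorem 3.4 (ii) / `thm:BoundednessOfTIm`.  For quasiconcave `I`,
`T_I : L¹ → L¹` is bounded iff `I` satisfies condition (★). -/
theorem statement5 (I : ℝ → ℝ) (hqc : Quasiconcave I) :
    (∃ C : ℝ, 0 < C ∧ ∀ f : ℝ → ℝ≥0∞, Measurable f →
        ∫⁻ t in Set.Ioo (0:ℝ) 1, TI I f t ≤
          ENNReal.ofReal C * ∫⁻ t in Set.Ioo (0:ℝ) 1, rearr f t)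
    ↔ StarCond I := by
  constructor
  · rintro ⟨C, hC, hbound⟩
    exact ⟨C, hC, fun a ha => hqc.lintegral_le_of_lintegral_TI_le hbound ha⟩
  · rintro ⟨C, hC, hstar⟩
    exact ⟨C + 1, by linarith, fun f _ =>
      lintegral_weight_mul_iSup_le hqc hstar hC.le (rearr_antitone f)⟩
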